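/- arXiv:2410.00072 — 11 statements merged into one kernel-verified Lean document; each statement's English description precedes it below -/
import Mathlib

section
/- Let (G,·,e,⊙) be a left group-e-semigroup. Then the set e⊙G = {e⊙x : x ∈ G} is a subgroup of the semigroup (G,⊙); concretely: (e⊙x)⊙(e⊙y) = e⊙(x·y) for all x,y ∈ G (so e⊙G is closed under ⊙), (e⊙e)⊙(e⊙x) = e⊙x = (e⊙x)⊙(e⊙e) for all x ∈ G (e⊙e is a two-sided identity on e⊙G), and (e⊙x)⊙(e⊙x⁻¹) = e⊙e = (e⊙x⁻¹)⊙(e⊙x) for all x ∈ G, where x⁻¹ denotes the inverse of x in the group (G,·). -/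
/-! Associativity turns the left `e`-join law into `(e⊙a)⊙b = e⊙(a·b)`, so `x ↦ e⊙x` is a
homomorphism from `(G,·)` onto `(e⊙G, ⊙)`, and the group laws of `G` transfer to its image. -/

theorem op_op_one_left {M : Type*} [Mul M] [One M] (op : M → M → M)
    (hassoc : ∀ x y z : M, op (op x y) z = op x (op y z))
    (hjoin : ∀ x y : M, op 1 (x * y) = op 1 (op x y)) (a b : M) :
    op (op 1 a) b = op 1 (a * b) := by
  rw [hassoc, ← hjoin]

theorem op_one_mul_op_one {M : Type*} [MulOneClass M] (op : M → M → M)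
    (hassoc : ∀ x y z : M, op (op x y) z = op x (op y z))
    (hjoin : ∀ x y : M, op 1 (x * y) = op 1 (op x y)) (a b : M) :
    op (op 1 a) (op 1 b) = op 1 (a * b) := by
  have hleft := op_op_one_left op hassoc hjoin
  rw [← hassoc, hleft a 1, mul_one, hleft]

/-- In a left group-`e`-semigroup `(G, ·, e, ⊙)` (here the group identity
`e` is `1`), the set `e ⊙ G` is a subgroup of the semigroup `(G, ⊙)`:
it is closed under `⊙` (concretely `(e⊙x) ⊙ (e⊙y) = e⊙(x·y)`), `e⊙e` is a two-sided
identity on it, and `e⊙x⁻¹` is a two-sided inverse of `e⊙x` with respect to `e⊙e`. -/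
theorem stmt_0 {G : Type*} [Group G] (op : G → G → G)
    (hassoc : ∀ x y z : G, op (op x y) z = op x (op y z))
    (hjoin : ∀ x y : G, op 1 (x * y) = op 1 (op x y)) :
    (∀ x y : G, op (op 1 x) (op 1 y) = op 1 (x * y)) ∧
    (∀ x : G, op (op 1 1) (op 1 x) = op 1 x ∧ op (op 1 x) (op 1 1) = op 1 x) ∧
    (∀ x : G, op (op 1 x) (op 1 x⁻¹) = op 1 1 ∧ op (op 1 x⁻¹) (op 1 x) = op 1 1) := by
  have hmul := op_one_mul_op_one op hassoc hjoin
  refine ⟨hmul, fun x => ?_, fun x => ?_⟩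
  · simp only [hmul, one_mul, mul_one, and_self]
  · simp only [hmul, mul_inv_cancel, inv_mul_cancel, and_self]
end

section
/- Let (G,·,e,⊙) be a left group-e-semigroup. Then e⊙G is an ideal of the semigroup (G,⊙) if and only if e⊙e is central in (G,⊙), i.e. (e⊙e)⊙x = x⊙(e⊙e) for all x ∈ G. -/
/-- A subset `I` is an ideal of the semigroup `(G, op)`. -/
def IsMagmaIdeal {G : Type*} (op : G → G → G) (I : Set G) : Prop :=
  ∀ x : G, ∀ i ∈ I, op x i ∈ I ∧ op i x ∈ I

/-!
Write `c = e ⊙ e` (with `e = 1`). The two laws give `(e ⊙ a) ⊙ b = e ⊙ (a * b)`, so `e ⊙ G` is always a right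
ideal, `c ⊙ x = e ⊙ x`, and `e ⊙ -` fixes `e ⊙ G` pointwise; hence any product `x ⊙ w` lying in
`e ⊙ G` equals `e ⊙ (x ⊙ w) = e ⊙ (x * w)`.

If `c` is central, `x ⊙ (e ⊙ a) = x ⊙ c ⊙ a = c ⊙ x ⊙ a = e ⊙ (x ⊙ a)`, so `e ⊙ G` is a left ideal.
Conversely, if it is a left ideal then `c⁻¹ ⊙ c = e ⊙ (c⁻¹ * c) = c`, which makes right
multiplication by `c` invisible after `e ⊙ -`: `e ⊙ (a * c) = e ⊙ (a * c⁻¹ * c) = e ⊙ a`.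
Therefore `x ⊙ c = e ⊙ (x * c) = e ⊙ x = c ⊙ x`.
-/

section LeftGroupESemigroup

variable {G : Type*} [Group G] {op : G → G → G}

theorem op_op_one_eq_op_one_mul (hassoc : ∀ x y z : G, op (op x y) z = op x (op y z))
    (hjoin : ∀ x y : G, op 1 (x * y) = op 1 (op x y)) (a b : G) :
    op (op 1 a) b = op 1 (a * b) := by
  rw [hassoc, hjoin]

theorem op_op_one_one (hassoc : ∀ x y z : G, op (op x y) z = op x (op y z))
    (hjoin : ∀ x y : G, op 1 (x * y) = op 1 (op x y)) (a : G) :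
    op (op 1 1) a = op 1 a := by
  rw [op_op_one_eq_op_one_mul hassoc hjoin, one_mul]

theorem op_one_op_one (hjoin : ∀ x y : G, op 1 (x * y) = op 1 (op x y)) (a : G) :
    op 1 (op 1 a) = op 1 a := by
  rw [← hjoin, one_mul]

theorem eq_op_one_mul_of_op_mem_range (hjoin : ∀ x y : G, op 1 (x * y) = op 1 (op x y))
    {x w : G} (h : op x w ∈ Set.range (op 1)) :
    op x w = op 1 (x * w) := by
  obtain ⟨z, hz⟩ := h
  rw [hjoin, ← hz, op_one_op_one hjoin]

theorem isMagmaIdeal_range_op_one_iff (hassoc : ∀ x y z : G, op (op x y) z = op x (op y z))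
    (hjoin : ∀ x y : G, op 1 (x * y) = op 1 (op x y)) :
    IsMagmaIdeal op (Set.range (op 1)) ↔ ∀ x a : G, op x (op 1 a) ∈ Set.range (op 1) := by
  constructor
  · intro h x a
    exact (h x _ ⟨a, rfl⟩).1
  · rintro h x _ ⟨a, rfl⟩
    exact ⟨h x a, a * x, (op_op_one_eq_op_one_mul hassoc hjoin a x).symm⟩

theorem op_one_mul_op_one_one (hassoc : ∀ x y z : G, op (op x y) z = op x (op y z))
    (hjoin : ∀ x y : G, op 1 (x * y) = op 1 (op x y))
    (hleft : ∀ x a : G, op x (op 1 a) ∈ Set.range (op 1)) (a : G) :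
    op 1 (a * op 1 1) = op 1 a := by
  set c := op 1 1
  have hc : op c⁻¹ c = c := by
    rw [eq_op_one_mul_of_op_mem_range hjoin (hleft c⁻¹ 1), inv_mul_cancel]
  calc op 1 (a * c) = op (op 1 a) (op c⁻¹ c) := by rw [hc, op_op_one_eq_op_one_mul hassoc hjoin]
    _ = op 1 (a * c⁻¹ * c) := by rw [← hassoc, op_op_one_eq_op_one_mul hassoc hjoin,
          op_op_one_eq_op_one_mul hassoc hjoin]
    _ = op 1 a := by rw [inv_mul_cancel_right]

theorem op_one_one_comm_of_forall_op_mem_range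
    (hassoc : ∀ x y z : G, op (op x y) z = op x (op y z))
    (hjoin : ∀ x y : G, op 1 (x * y) = op 1 (op x y))
    (hleft : ∀ x a : G, op x (op 1 a) ∈ Set.range (op 1)) (x : G) :
    op (op 1 1) x = op x (op 1 1) := by
  rw [op_op_one_one hassoc hjoin, eq_op_one_mul_of_op_mem_range hjoin (hleft x 1),
    op_one_mul_op_one_one hassoc hjoin hleft]

theorem op_op_one_mem_range_of_op_one_one_comm
    (hassoc : ∀ x y z : G, op (op x y) z = op x (op y z))
    (hjoin : ∀ x y : G, op 1 (x * y) = op 1 (op x y))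
    (hcomm : ∀ x : G, op (op 1 1) x = op x (op 1 1)) (x a : G) :
    op x (op 1 a) ∈ Set.range (op 1) :=
  ⟨op x a, by rw [← op_op_one_one hassoc hjoin (op x a), ← hassoc, hcomm, hassoc,
    op_op_one_one hassoc hjoin]⟩

end LeftGroupESemigroup

/-- In a left group-`e`-semigroup `(G, ·, e, ⊙)` (group identity `e = 1`),
the set `e ⊙ G` is an ideal of the semigroup `(G, ⊙)` if and only if `e ⊙ e` is
central in `(G, ⊙)`. -/
theorem stmt_1 {G : Type*} [Group G] (op : G → G → G)
    (hassoc : ∀ x y z : G, op (op x y) z = op x (op y z))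
    (hjoin : ∀ x y : G, op 1 (x * y) = op 1 (op x y)) :
    IsMagmaIdeal op (Set.range (op 1)) ↔ ∀ x : G, op (op 1 1) x = op x (op 1 1) := by
  rw [isMagmaIdeal_range_op_one_iff hassoc hjoin]
  exact ⟨op_one_one_comm_of_forall_op_mem_range hassoc hjoin,
    op_op_one_mem_range_of_op_one_one_comm hassoc hjoin⟩
end

section
/- Let (G,·,e,⊙) be a left group-e-semigroup. Then e⊙e is central in (G,⊙) (i.e. (e⊙e)⊙x = x⊙(e⊙e) for all x ∈ G) if and only if the semigroup (G,⊙) is a homogroup, i.e. there exists a subset H ⊆ G that is simultaneously an ideal of (G,⊙) and a group under ⊙; moreover, in that case necessarily H = e⊙G. -/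
/-- A subset `H` is a subgroup of the semigroup `(G, op)`: it is closed under `op`
and forms a group under `op`. -/
def IsSubgroupUnder {G : Type*} (op : G → G → G) (H : Set G) : Prop :=
  (∀ a ∈ H, ∀ b ∈ H, op a b ∈ H) ∧
  ∃ ι ∈ H, (∀ a ∈ H, op ι a = a ∧ op a ι = a) ∧
    ∀ a ∈ H, ∃ b ∈ H, op a b = ι ∧ op b a = ι

/-- `op` makes `(G, ·, e, op)` a left group-`e`-semigroup, with `e = 1`. -/
structure IsLeftGroupESemigroup {G : Type*} [Group G] (op : G → G → G) : Prop where
  assoc : ∀ x y z : G, op (op x y) z = op x (op y z)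
  join : ∀ x y : G, op 1 (x * y) = op 1 (op x y)

theorem isSubgroupUnder_range_of_map_mul {M G : Type*} [Group M] (op : G → G → G) (f : M → G)
    (hf : ∀ x y, op (f x) (f y) = f (x * y)) : IsSubgroupUnder op (Set.range f) := by
  refine ⟨?_, f 1, ⟨1, rfl⟩, ?_, ?_⟩
  · rintro _ ⟨p, rfl⟩ _ ⟨q, rfl⟩
    exact ⟨p * q, (hf p q).symm⟩
  · rintro _ ⟨p, rfl⟩
    rw [hf, hf, one_mul, mul_one]
    exact ⟨rfl, rfl⟩
  · rintro _ ⟨p, rfl⟩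
    exact ⟨f p⁻¹, ⟨p⁻¹, rfl⟩, by rw [hf, mul_inv_cancel], by rw [hf, inv_mul_cancel]⟩

theorem IsSubgroupUnder.op_eq_right_of_op_self {G : Type*} {op : G → G → G} {H : Set G}
    (hassoc : ∀ x y z : G, op (op x y) z = op x (op y z)) (hS : IsSubgroupUnder op H)
    {u : G} (hu : u ∈ H) (hidem : op u u = u) {a : G} (ha : a ∈ H) : op u a = a := by
  obtain ⟨-, ι, -, hid, hinv⟩ := hS
  obtain ⟨b, -, -, hbu⟩ := hinv u hu
  have hι : u = ι := calc
    u = op ι u := (hid u hu).1.symm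
    _ = op (op b u) u := by rw [hbu]
    _ = op b u := by rw [hassoc, hidem]
    _ = ι := hbu
  exact hι ▸ (hid a ha).1

namespace IsLeftGroupESemigroup

variable {G : Type*} [Group G] {op : G → G → G}

theorem op_one_op (h : IsLeftGroupESemigroup op) (x y : G) : op (op 1 x) y = op 1 (x * y) :=
  (h.assoc 1 x y).trans (h.join x y).symm

theorem op_one_one_op (h : IsLeftGroupESemigroup op) (x : G) : op (op 1 1) x = op 1 x := by
  rw [h.op_one_op, one_mul]

theorem op_one_op_one (h : IsLeftGroupESemigroup op) (x y : G) :
    op (op 1 x) (op 1 y) = op 1 (x * y) := by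
  have hright : op (op 1 x) 1 = op 1 x := by rw [h.op_one_op, mul_one]
  rw [← h.op_one_one_op y, ← h.assoc, ← h.assoc, hright, hright, h.op_one_op]

theorem isSubgroupUnder_range (h : IsLeftGroupESemigroup op) :
    IsSubgroupUnder op (Set.range (op 1)) :=
  isSubgroupUnder_range_of_map_mul op (op 1) h.op_one_op_one

theorem range_subset_of_isMagmaIdeal (h : IsLeftGroupESemigroup op) {H : Set G}
    (hI : IsMagmaIdeal op H) (hne : H.Nonempty) : Set.range (op 1) ⊆ H := by
  obtain ⟨i, hi⟩ := hne
  rintro _ ⟨p, rfl⟩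
  simpa only [h.op_one_op, inv_mul_cancel_right] using (hI (op 1 (p * i⁻¹)) i hi).1

theorem eq_range_of_isMagmaIdeal (h : IsLeftGroupESemigroup op) {H : Set G}
    (hI : IsMagmaIdeal op H) (hS : IsSubgroupUnder op H) : H = Set.range (op 1) := by
  have hsub := h.range_subset_of_isMagmaIdeal hI (let ⟨_, ι, hι, _⟩ := hS; ⟨ι, hι⟩)
  refine Set.Subset.antisymm (fun a ha => ⟨a, ?_⟩) hsub
  rw [← h.op_one_one_op]
  exact hS.op_eq_right_of_op_self h.assoc (hsub ⟨1, rfl⟩)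
    (by rw [h.op_one_op_one, one_mul]) ha

theorem isMagmaIdeal_range (h : IsLeftGroupESemigroup op)
    (hc : ∀ x : G, op (op 1 1) x = op x (op 1 1)) : IsMagmaIdeal op (Set.range (op 1)) := by
  rintro x _ ⟨a, rfl⟩
  refine ⟨⟨x * a, ?_⟩, ⟨a * x, (h.op_one_op a x).symm⟩⟩
  rw [← h.op_one_op, ← h.op_one_one_op x, hc x, h.assoc, h.op_one_one_op]

theorem central_of_isMagmaIdeal_range (h : IsLeftGroupESemigroup op)
    (hI : IsMagmaIdeal op (Set.range (op 1))) (x : G) : op (op 1 1) x = op x (op 1 1) := by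
  obtain ⟨p, hp⟩ := (hI x (op 1 1) ⟨1, rfl⟩).1
  calc op (op 1 1) x = op (op 1 x) (op 1 1) := by rw [h.op_one_op_one, mul_one, h.op_one_one_op]
    _ = op (op 1 1) (op x (op 1 1)) := by rw [← h.op_one_one_op x, h.assoc]
    _ = op x (op 1 1) := by rw [← hp, h.op_one_op_one, one_mul]

end IsLeftGroupESemigroup

/-- In a left group-`e`-semigroup `(G, ·, e, ⊙)` (group identity `e = 1`),
`e ⊙ e` is central in `(G, ⊙)` iff `(G, ⊙)` is a homogroup (contains an ideal subgroup);
moreover any ideal subgroup necessarily equals `e ⊙ G`. -/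
theorem stmt_2 {G : Type*} [Group G] (op : G → G → G)
    (hassoc : ∀ x y z : G, op (op x y) z = op x (op y z))
    (hjoin : ∀ x y : G, op 1 (x * y) = op 1 (op x y)) :
    ((∀ x : G, op (op 1 1) x = op x (op 1 1)) ↔
      ∃ H : Set G, IsMagmaIdeal op H ∧ IsSubgroupUnder op H) ∧
    (∀ H : Set G, IsMagmaIdeal op H → IsSubgroupUnder op H → H = Set.range (op 1)) := by
  have h : IsLeftGroupESemigroup op := ⟨hassoc, hjoin⟩
  refine ⟨⟨fun hc => ⟨_, h.isMagmaIdeal_range hc, h.isSubgroupUnder_range⟩, ?_⟩,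
    fun _ => h.eq_range_of_isMagmaIdeal⟩
  rintro ⟨H, hI, hS⟩
  exact h.central_of_isMagmaIdeal_range (h.eq_range_of_isMagmaIdeal hI hS ▸ hI)
end

section
/- Every (two-sided) group-e-semigroup is a group-e-homogroup: if (G,·,e,⊙) is a group-e-semigroup, then the semigroup (G,⊙) is a homogroup; in fact e⊙G = {e⊙x : x ∈ G} is an ideal of (G,⊙) that is a group under ⊙. -/
/-!
The map `φ x = e ⊙ x` turns `⊙` into the group law: the join laws and associativity give
`x ⊙ φ a = φ (x * a)` and `φ a ⊙ x = φ (a * x)`, hence `φ a ⊙ φ b = φ (a * b)`. So `e ⊙ G` is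
the image of a group under a multiplicative map, which is a group under `⊙`, and it absorbs
`⊙`-products from both sides.
-/

theorem isSubgroupUnder_range {G M : Type*} [Group G] {op : M → M → M} {f : G → M}
    (hf : ∀ a b, op (f a) (f b) = f (a * b)) :
    IsSubgroupUnder op (Set.range f) := by
  refine ⟨?_, f 1, ⟨1, rfl⟩, ?_, ?_⟩
  · rintro _ ⟨a, rfl⟩ _ ⟨b, rfl⟩
    exact ⟨a * b, (hf a b).symm⟩
  · rintro _ ⟨a, rfl⟩
    exact ⟨by rw [hf, one_mul], by rw [hf, mul_one]⟩
  · rintro _ ⟨a, rfl⟩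
    exact ⟨f a⁻¹, ⟨a⁻¹, rfl⟩, by rw [hf, mul_inv_cancel], by rw [hf, inv_mul_cancel]⟩

theorem isMagmaIdeal_range {G : Type*} [Mul G] {op : G → G → G} {f : G → G}
    (hleft : ∀ x a, op x (f a) = f (x * a)) (hright : ∀ a x, op (f a) x = f (a * x)) :
    IsMagmaIdeal op (Set.range f) := by
  rintro x _ ⟨a, rfl⟩
  exact ⟨⟨x * a, (hleft x a).symm⟩, ⟨a * x, (hright a x).symm⟩⟩

section JoinLaws

variable {G : Type*} [MulOneClass G] {op : G → G → G}

theorem op_one_op (hassoc : ∀ x y z, op (op x y) z = op x (op y z))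
    (hjoinL : ∀ x y : G, op 1 (x * y) = op 1 (op x y)) (x y : G) :
    op (op 1 x) y = op 1 (x * y) := by
  rw [hassoc, ← hjoinL]

theorem op_op_one (hassoc : ∀ x y z, op (op x y) z = op x (op y z))
    (hjoinR : ∀ x y : G, op (x * y) 1 = op (op x y) 1) (x y : G) :
    op x (op y 1) = op (x * y) 1 := by
  rw [← hassoc, ← hjoinR]

theorem op_one_comm (hassoc : ∀ x y z, op (op x y) z = op x (op y z))
    (hjoinL : ∀ x y : G, op 1 (x * y) = op 1 (op x y))
    (hjoinR : ∀ x y : G, op (x * y) 1 = op (op x y) 1) (x : G) :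
    op x 1 = op 1 x :=
  calc op x 1 = op (op 1 x) 1 := by rw [← hjoinR, one_mul]
    _ = op 1 x := by rw [op_one_op hassoc hjoinL, mul_one]

theorem op_op_one_left_s4 (hassoc : ∀ x y z, op (op x y) z = op x (op y z))
    (hjoinL : ∀ x y : G, op 1 (x * y) = op 1 (op x y))
    (hjoinR : ∀ x y : G, op (x * y) 1 = op (op x y) 1) (x a : G) :
    op x (op 1 a) = op 1 (x * a) := by
  rw [← op_one_comm hassoc hjoinL hjoinR, op_op_one hassoc hjoinR,
    op_one_comm hassoc hjoinL hjoinR]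

theorem op_one_op_one_s4 (hassoc : ∀ x y z, op (op x y) z = op x (op y z))
    (hjoinL : ∀ x y : G, op 1 (x * y) = op 1 (op x y))
    (hjoinR : ∀ x y : G, op (x * y) 1 = op (op x y) 1) (a b : G) :
    op (op 1 a) (op 1 b) = op 1 (a * b) := by
  have hidem : op 1 (op 1 (a * b)) = op 1 (a * b) := by
    rw [op_op_one_left_s4 hassoc hjoinL hjoinR, one_mul]
  rw [op_one_op hassoc hjoinL, hjoinL, op_op_one_left_s4 hassoc hjoinL hjoinR, hidem]

end JoinLaws

/-- Every (two-sided) group-`e`-semigroup is a group-`e`-homogroup: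
if `(G, ·, e, ⊙)` satisfies both the left and right `e`-join laws (group identity
`e = 1`), then `e ⊙ G` is an ideal of `(G, ⊙)` that is a group under `⊙`,
so `(G, ⊙)` is a homogroup. -/
theorem stmt_4 {G : Type*} [Group G] (op : G → G → G)
    (hassoc : ∀ x y z : G, op (op x y) z = op x (op y z))
    (hjoinL : ∀ x y : G, op 1 (x * y) = op 1 (op x y))
    (hjoinR : ∀ x y : G, op (x * y) 1 = op (op x y) 1) :
    IsMagmaIdeal op (Set.range (op 1)) ∧ IsSubgroupUnder op (Set.range (op 1)) :=
  ⟨isMagmaIdeal_range (op_op_one_left_s4 hassoc hjoinL hjoinR) (op_one_op hassoc hjoinL),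
    isSubgroupUnder_range (op_one_op_one_s4 hassoc hjoinL hjoinR)⟩
end

section
/- There exists a left group-e-semigroup that is not a left group-e-homogroup: let (G,·) be any group with identity e having more than one element, and define x⊙y := x for all x,y ∈ G. Then ⊙ is associative and the left e-join law e⊙(x·y) = e⊙(x⊙y) holds for all x,y, so (G,·,e,⊙) is a left group-e-semigroup; but no subset H ⊆ G is simultaneously an ideal of (G,⊙) and a group under ⊙, so (G,⊙) is not a homogroup. -/
section LeftZero

variable {G : Type*} {op : G → G → G}

theorem IsSubgroupUnder.nonempty {H : Set G} (hH : IsSubgroupUnder op H) : H.Nonempty :=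
  let ⟨ι, hι, _⟩ := hH.2
  ⟨ι, hι⟩

theorem IsMagmaIdeal.eq_univ_of_left_zero (hop : ∀ x y, op x y = x) {I : Set G}
    (hI : IsMagmaIdeal op I) (hne : I.Nonempty) : I = Set.univ := by
  obtain ⟨i, hi⟩ := hne
  refine Set.eq_univ_of_forall fun x => ?_
  simpa only [hop] using (hI x i hi).1

theorem IsSubgroupUnder.subsingleton_of_left_zero (hop : ∀ x y, op x y = x) {H : Set G}
    (hH : IsSubgroupUnder op H) : H.Subsingleton := by
  obtain ⟨-, ι, -, hid, -⟩ := hH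
  have hι : ∀ a ∈ H, ι = a := fun a ha => by simpa only [hop] using (hid a ha).1
  exact fun a ha b hb => (hι a ha).symm.trans (hι b hb)

theorem not_exists_ideal_subgroupUnder_of_left_zero [Nontrivial G] (hop : ∀ x y, op x y = x) :
    ¬ ∃ H : Set G, IsMagmaIdeal op H ∧ IsSubgroupUnder op H := by
  rintro ⟨H, hI, hH⟩
  have hsub := hH.subsingleton_of_left_zero hop
  rw [hI.eq_univ_of_left_zero hop hH.nonempty, Set.subsingleton_univ_iff] at hsub
  exact not_subsingleton G hsub

end LeftZero

/-- There exists a left group-`e`-semigroup that is not a left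
group-`e`-homogroup: for any group `G` with more than one element and the operation
`x ⊙ y := x`, the operation `⊙` is associative and the left `e`-join law holds
(so `(G, ·, 1, ⊙)` is a left group-`e`-semigroup), but no subset of `G` is
simultaneously an ideal of `(G, ⊙)` and a group under `⊙`. -/
theorem stmt_5 {G : Type*} [Group G] (hG : Nontrivial G)
    (op : G → G → G) (hop : ∀ x y : G, op x y = x) :
    (∀ x y z : G, op (op x y) z = op x (op y z)) ∧
    (∀ x y : G, op 1 (x * y) = op 1 (op x y)) ∧
    ¬ ∃ H : Set G, IsMagmaIdeal op H ∧ IsSubgroupUnder op H :=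
  ⟨fun x y z => by simp only [hop], fun x y => by simp only [hop],
    not_exists_ideal_subgroupUnder_of_left_zero hop⟩
end

section
/- There exists a group-e-homogroup that is not a group-e-grouplike: fix an integer n ≥ 2 and consider Fin n with addition modulo n (a group with identity 0) and the operation min (with respect to the natural linear order on Fin n). Then min is associative; the 0-join laws min(0, x+y) = min(0, min(x,y)) and min(x+y, 0) = min(min(x,y), 0) hold for all x,y, so (Fin n, +, 0, min) is a group-0-semigroup; the singleton {0} is an ideal of (Fin n, min) that is a group under min, so (Fin n, min) is a homogroup; but every element of Fin n is a central idempotent of min, so (Fin n, min) has more than one central idempotent and hence is not a grouplike. -/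
theorem isMagmaIdeal_singleton_of_absorbing {G : Type*} {op : G → G → G} {z : G}
    (hz : ∀ x, op x z = z ∧ op z x = z) : IsMagmaIdeal op {z} := by
  rintro x i rfl
  exact hz x

theorem isSubgroupUnder_singleton_of_idempotent {G : Type*} {op : G → G → G} {e : G}
    (he : op e e = e) : IsSubgroupUnder op {e} := by
  refine ⟨?_, e, rfl, ?_, ?_⟩
  · rintro a rfl b rfl
    exact he
  · rintro a rfl
    exact ⟨he, he⟩
  · rintro a rfl
    exact ⟨_, rfl, he, he⟩

/-- For every integer `n ≥ 2` (here `n + 2` with `n : ℕ`), on `Fin (n+2)`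
with addition modulo `n+2` (a group with identity `0`) and the operation `min`:
`min` is associative; the `0`-join laws hold (so we get a group-`0`-semigroup);
`{0}` is an ideal of `(Fin (n+2), min)` that is a group under `min` (so it is a
homogroup); but every element is a central idempotent of `min`, and there are at least
two distinct central idempotents, so `(Fin (n+2), min)` is not a grouplike. -/
theorem stmt_8 (n : ℕ) :
    (∀ x y z : Fin (n + 2), min (min x y) z = min x (min y z)) ∧
    (∀ x y : Fin (n + 2),
      min 0 (x + y) = min 0 (min x y) ∧ min (x + y) 0 = min (min x y) 0) ∧
    (IsMagmaIdeal (fun a b : Fin (n + 2) => min a b) {0} ∧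
      IsSubgroupUnder (fun a b : Fin (n + 2) => min a b) {0}) ∧
    (∀ δ : Fin (n + 2), min δ δ = δ ∧ ∀ x : Fin (n + 2), min δ x = min x δ) ∧
    (∃ δ₁ δ₂ : Fin (n + 2), δ₁ ≠ δ₂ ∧
      (min δ₁ δ₁ = δ₁ ∧ ∀ x : Fin (n + 2), min δ₁ x = min x δ₁) ∧
      (min δ₂ δ₂ = δ₂ ∧ ∀ x : Fin (n + 2), min δ₂ x = min x δ₂)) := by
  have zero_absorbing (x : Fin (n + 2)) : min x 0 = 0 ∧ min 0 x = 0 :=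
    bot_eq_zero (α := Fin (n + 2)) ▸ ⟨min_bot_right x, min_bot_left x⟩
  refine ⟨min_assoc, fun x y => ⟨?_, ?_⟩,
    ⟨isMagmaIdeal_singleton_of_absorbing zero_absorbing,
      isSubgroupUnder_singleton_of_idempotent (min_self 0)⟩,
    fun δ => ⟨min_self δ, min_comm δ⟩,
    0, 1, zero_ne_one, ⟨min_self 0, min_comm 0⟩, ⟨min_self 1, min_comm 1⟩⟩
  · rw [(zero_absorbing _).2, (zero_absorbing _).2]
  · rw [(zero_absorbing _).1, (zero_absorbing _).1]
end

section
/- Let (S,·) and (S,⊙) be semigroups on the same set satisfying the left e-join law e⊙(x·y) = e⊙(x⊙y) for all x,y ∈ S (a left e-semig), and let J_e(x) := e⊙x. (A) If J_e is right e-periodic, i.e. e⊙(x·e) = e⊙x for all x, then: e⊙(x·y) = (e⊙x)⊙(e⊙y) for all x,y (J_e is a homomorphism from (S,·) to (S,⊙), and hence also an endomorphism of (S,⊙)); and J_e is a right canceler for both operations: e⊙(x·(e⊙y)) = e⊙(x·y) and e⊙(x⊙(e⊙y)) = e⊙(x⊙y) for all x,y. (B) If J_e is left e-periodic, i.e. e⊙(e·x)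 = e⊙x for all x, then J_e is a left canceler for both operations: e⊙((e⊙x)·y) = e⊙(x·y) and e⊙((e⊙x)⊙y) = e⊙(x⊙y) for all x,y. -/
/-!
Associativity of `⊙` turns the join law into `e ⊙ (x·y) = (e ⊙ x) ⊙ y`, so every
`e ⊙ (x·y)` can be rewritten into a pure `⊙`-expression. Right `e`-periodicity then says
`(e ⊙ x) ⊙ e = e ⊙ x`, which lets us insert an `e` in front of `y`; left `e`-periodicity says
`J_e` is idempotent, which lets us drop a repeated `e ⊙`. The statements about `⊙` follow from
those about `·` by one more application of the join law.
-/

section LeftJoin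

variable {S : Type*} {mul op : S → S → S} {e : S}

theorem op_mul_eq_op_op_of_join (hop : ∀ x y z : S, op (op x y) z = op x (op y z))
    (hjoin : ∀ x y : S, op e (mul x y) = op e (op x y)) (x y : S) :
    op e (mul x y) = op (op e x) y := by
  rw [hjoin, hop]

theorem op_op_right_eq_of_rightPeriodic (hop : ∀ x y z : S, op (op x y) z = op x (op y z))
    (hjoin : ∀ x y : S, op e (mul x y) = op e (op x y))
    (hright : ∀ x : S, op e (mul x e) = op e x) (x : S) :
    op (op e x) e = op e x := by
  rw [← op_mul_eq_op_op_of_join hop hjoin, hright]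

theorem joiner_map_mul (hop : ∀ x y z : S, op (op x y) z = op x (op y z))
    (hjoin : ∀ x y : S, op e (mul x y) = op e (op x y))
    (hright : ∀ x : S, op e (mul x e) = op e x) (x y : S) :
    op e (mul x y) = op (op e x) (op e y) := by
  rw [← hop, op_op_right_eq_of_rightPeriodic hop hjoin hright, op_mul_eq_op_op_of_join hop hjoin]

theorem joiner_map_op (hop : ∀ x y z : S, op (op x y) z = op x (op y z))
    (hjoin : ∀ x y : S, op e (mul x y) = op e (op x y))
    (hright : ∀ x : S, op e (mul x e) = op e x) (x y : S) :
    op e (op x y) = op (op e x) (op e y) := by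
  rw [← hjoin, joiner_map_mul hop hjoin hright]

theorem joiner_mul_joiner_right (hop : ∀ x y z : S, op (op x y) z = op x (op y z))
    (hjoin : ∀ x y : S, op e (mul x y) = op e (op x y))
    (hright : ∀ x : S, op e (mul x e) = op e x) (x y : S) :
    op e (mul x (op e y)) = op e (mul x y) := by
  rw [op_mul_eq_op_op_of_join hop hjoin, joiner_map_mul hop hjoin hright]

theorem joiner_op_joiner_right (hop : ∀ x y z : S, op (op x y) z = op x (op y z))
    (hjoin : ∀ x y : S, op e (mul x y) = op e (op x y))
    (hright : ∀ x : S, op e (mul x e) = op e x) (x y : S) :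
    op e (op x (op e y)) = op e (op x y) := by
  rw [← hjoin, joiner_mul_joiner_right hop hjoin hright, hjoin]

theorem joiner_idem_of_leftPeriodic (hjoin : ∀ x y : S, op e (mul x y) = op e (op x y))
    (hleft : ∀ x : S, op e (mul e x) = op e x) (x : S) :
    op e (op e x) = op e x := by
  rw [← hjoin, hleft]

theorem joiner_mul_joiner_left (hop : ∀ x y z : S, op (op x y) z = op x (op y z))
    (hjoin : ∀ x y : S, op e (mul x y) = op e (op x y))
    (hleft : ∀ x : S, op e (mul e x) = op e x) (x y : S) :
    op e (mul (op e x) y) = op e (mul x y) := by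
  rw [op_mul_eq_op_op_of_join hop hjoin, joiner_idem_of_leftPeriodic hjoin hleft,
    ← op_mul_eq_op_op_of_join hop hjoin]

theorem joiner_op_joiner_left (hop : ∀ x y z : S, op (op x y) z = op x (op y z))
    (hjoin : ∀ x y : S, op e (mul x y) = op e (op x y))
    (hleft : ∀ x : S, op e (mul e x) = op e x) (x y : S) :
    op e (op (op e x) y) = op e (op x y) := by
  rw [← hjoin, joiner_mul_joiner_left hop hjoin hleft, hjoin]

end LeftJoin

theorem stmt_10_general {S : Type*} (mul op : S → S → S) (e : S)
    (hop : ∀ x y z : S, op (op x y) z = op x (op y z))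
    (hjoin : ∀ x y : S, op e (mul x y) = op e (op x y)) :
    ((∀ x : S, op e (mul x e) = op e x) →
      (∀ x y : S, op e (mul x y) = op (op e x) (op e y)) ∧
      (∀ x y : S, op e (op x y) = op (op e x) (op e y)) ∧
      (∀ x y : S, op e (mul x (op e y)) = op e (mul x y)) ∧
      (∀ x y : S, op e (op x (op e y)) = op e (op x y))) ∧
    ((∀ x : S, op e (mul e x) = op e x) →
      (∀ x y : S, op e (mul (op e x) y) = op e (mul x y)) ∧
      (∀ x y : S, op e (op (op e x) y) = op e (op x y))) :=
  ⟨fun hright => ⟨joiner_map_mul hop hjoin hright, joiner_map_op hop hjoin hright,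
      joiner_mul_joiner_right hop hjoin hright, joiner_op_joiner_right hop hjoin hright⟩,
    fun hleft => ⟨joiner_mul_joiner_left hop hjoin hleft, joiner_op_joiner_left hop hjoin hleft⟩⟩

/-- Let `(S, mul)` and `(S, op)` be semigroups on the same set
satisfying the left `e`-join law `e ⊙ (x·y) = e ⊙ (x ⊙ y)` (a left `e`-semig),
and let `J_e x := e ⊙ x`.
(A) If `J_e` is right `e`-periodic (`e ⊙ (x·e) = e ⊙ x`), then `J_e` is a homomorphism
from `(S,·)` to `(S,⊙)`, an endomorphism of `(S,⊙)`, and a right canceler for both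
operations.
(B) If `J_e` is left `e`-periodic (`e ⊙ (e·x) = e ⊙ x`), then `J_e` is a left canceler
for both operations. -/
theorem stmt_10 {S : Type*} (mul op : S → S → S) (e : S)
    (hmul : ∀ x y z : S, mul (mul x y) z = mul x (mul y z))
    (hop : ∀ x y z : S, op (op x y) z = op x (op y z))
    (hjoin : ∀ x y : S, op e (mul x y) = op e (op x y)) :
    ((∀ x : S, op e (mul x e) = op e x) →
      (∀ x y : S, op e (mul x y) = op (op e x) (op e y)) ∧
      (∀ x y : S, op e (op x y) = op (op e x) (op e y)) ∧
      (∀ x y : S, op e (mul x (op e y)) = op e (mul x y)) ∧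
      (∀ x y : S, op e (op x (op e y)) = op e (op x y))) ∧
    ((∀ x : S, op e (mul e x) = op e x) →
      (∀ x y : S, op e (mul (op e x) y) = op e (mul x y)) ∧
      (∀ x y : S, op e (op (op e x) y) = op e (op x y))) :=
  stmt_10_general mul op e hop hjoin
end

section
/- Fix a real number b ≠ 0 and define the b-addition on ℝ by x +_b y := b·fract((x+y)/b), where fract denotes the fractional part (so x +_b y = (x+y) − b·⌊(x+y)/b⌋). Then: (i) +_b is associative; (ii) for every e,x,y ∈ ℝ, e +_b (x+y) = e +_b (x +_b y) and (x+y) +_b e = (x +_b y) +_b e, so (ℝ,+,e,+_b) is an e-semig for every e ∈ ℝ (a group-joined-semigroup); (iii) for every integer k and all x,y ∈ ℝ, (b·k) +_b (x+y) = x +_b y (the e-semig is identical at every element of bℤ); (iv) 0 +_b (x +_b y) = x +_b y for all x,y; (v) 0 is the unique element t ∈ ℝ with t +_b t = t; (vi) x +_b (−x) = 0 for every x ∈ ℝ. Hence (ℝ,+_b) is a class united (unipotent) grouplike. -/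
/-!
`x +_b y` is the representative of `x + y` modulo `bℤ` in the fundamental domain between `0` and `b`,
so it depends only on the class of `x + y` and lies in that class. Hence inner `b`-additions can be
replaced by ordinary ones, giving associativity and the join laws. An idempotent `t = t +_b t` is
congruent to `2t`, so `t ∈ bℤ` and then `t = t +_b t = 0 +_b 0 = 0`.
-/

noncomputable def bAdd (b x y : ℝ) : ℝ := b * Int.fract ((x + y) / b)

section BAdd

variable {b : ℝ}

theorem bAdd_eq_sub_mul_floor (hb : b ≠ 0) (x y : ℝ) :
    bAdd b x y = (x + y) - b * (⌊(x + y) / b⌋ : ℤ) := by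
  rw [bAdd, Int.fract, mul_sub, mul_div_cancel₀ _ hb]

theorem bAdd_eq_of_add_sub_add_eq (hb : b ≠ 0) {x y x' y' : ℝ} (k : ℤ)
    (h : x + y - (x' + y') = b * k) : bAdd b x y = bAdd b x' y' := by
  have hdiv : (x + y) / b = (x' + y') / b + k := by
    rw [eq_add_of_sub_eq' h, add_div, mul_div_cancel_left₀ _ hb, add_comm]
  rw [bAdd, bAdd, hdiv, Int.fract_add_intCast]

theorem bAdd_bAdd_left (hb : b ≠ 0) (x y z : ℝ) : bAdd b (bAdd b x y) z = bAdd b (x + y) z :=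
  bAdd_eq_of_add_sub_add_eq hb (-⌊(x + y) / b⌋) (by rw [bAdd_eq_sub_mul_floor hb]; push_cast; ring)

theorem bAdd_bAdd_right (hb : b ≠ 0) (x y z : ℝ) : bAdd b x (bAdd b y z) = bAdd b x (y + z) :=
  bAdd_eq_of_add_sub_add_eq hb (-⌊(y + z) / b⌋) (by rw [bAdd_eq_sub_mul_floor hb]; push_cast; ring)

theorem bAdd_assoc (hb : b ≠ 0) (x y z : ℝ) :
    bAdd b (bAdd b x y) z = bAdd b x (bAdd b y z) := by
  rw [bAdd_bAdd_left hb, bAdd_bAdd_right hb, bAdd, bAdd, add_assoc]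

theorem bAdd_mul_intCast_left (hb : b ≠ 0) (k : ℤ) (x y : ℝ) :
    bAdd b (b * k) (x + y) = bAdd b x y :=
  bAdd_eq_of_add_sub_add_eq hb k (by ring)

theorem bAdd_self_eq_self_iff (hb : b ≠ 0) (t : ℝ) : bAdd b t t = t ↔ t = 0 := by
  constructor
  · intro h
    set m := ⌊(t + t) / b⌋
    have ht : t = b * m := by linarith [bAdd_eq_sub_mul_floor hb t t]
    have hzero : bAdd b t t = bAdd b 0 0 :=
      bAdd_eq_of_add_sub_add_eq hb (2 * m) (by rw [ht]; push_cast; ring)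
    rw [← h, hzero, bAdd, zero_add, zero_div, Int.fract_zero, mul_zero]
  · rintro rfl
    simp [bAdd]

theorem bAdd_neg_right (x : ℝ) : bAdd b x (-x) = 0 := by
  simp [bAdd]

end BAdd

/-- Fix `b ≠ 0`. Then:
(o) `x +_b y = (x + y) - b·⌊(x + y)/b⌋`;
(i) `+_b` is associative;
(ii) for every `e`, the `e`-join laws hold (`(ℝ, +, e, +_b)` is an `e`-semig for every
`e`, i.e. a group-joined-semigroup);
(iii) the `e`-semig is identical at every element of `bℤ`;
(iv) `0 +_b (x +_b y) = x +_b y` (class united);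
(v) `0` is the unique idempotent of `+_b` (unipotent);
(vi) `x +_b (-x) = 0`.
Hence `(ℝ, +_b)` is a class united (unipotent) grouplike. -/
theorem stmt_14 (b : ℝ) (hb : b ≠ 0) :
    (∀ x y : ℝ, bAdd b x y = (x + y) - b * (⌊(x + y) / b⌋ : ℤ)) ∧
    (∀ x y z : ℝ, bAdd b (bAdd b x y) z = bAdd b x (bAdd b y z)) ∧
    (∀ e x y : ℝ, bAdd b e (x + y) = bAdd b e (bAdd b x y) ∧
      bAdd b (x + y) e = bAdd b (bAdd b x y) e) ∧
    (∀ k : ℤ, ∀ x y : ℝ, bAdd b (b * (k : ℝ)) (x + y) = bAdd b x y) ∧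
    (∀ x y : ℝ, bAdd b 0 (bAdd b x y) = bAdd b x y) ∧
    (∀ t : ℝ, bAdd b t t = t ↔ t = 0) ∧
    (∀ x : ℝ, bAdd b x (-x) = 0) := by
  refine ⟨bAdd_eq_sub_mul_floor hb, bAdd_assoc hb,
    fun e x y => ⟨(bAdd_bAdd_right hb e x y).symm, (bAdd_bAdd_left hb x y e).symm⟩,
    bAdd_mul_intCast_left hb, fun x y => ?_, bAdd_self_eq_self_iff hb, bAdd_neg_right⟩
  rw [bAdd_bAdd_right hb, bAdd, bAdd, zero_add]
end

section
/- Every left identical e-semig is a left semigroup-joined-semigroup: if (S,·) and (S,⊙) are semigroups on the same set and e₀ ∈ S satisfies e₀⊙(x·y) = e₀⊙(x⊙y) = x⊙y for all x,y ∈ S, then for every e ∈ S the left e-join law holds, i.e. e⊙(x·y) = e⊙(x⊙y) for all x,y ∈ S (equivalently, since ⊙ is associative, e⊙(x·y) = (e⊙x)⊙y). -/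
theorem op_e₀_mul_eq_op {S : Type*} (mul op : S → S → S) (e₀ : S)
    (h1 : ∀ x y : S, op e₀ (mul x y) = op e₀ (op x y))
    (h2 : ∀ x y : S, op e₀ (op x y) = op x y) (a b : S) :
    op e₀ (mul a b) = op a b :=
  (h1 a b).trans (h2 a b)

theorem op_mul_left_eq_op_op_left {S : Type*} (mul op : S → S → S)
    (hop : ∀ x y z : S, op (op x y) z = op x (op y z)) (e₀ : S)
    (h1 : ∀ x y : S, op e₀ (mul x y) = op e₀ (op x y))
    (h2 : ∀ x y : S, op e₀ (op x y) = op x y) (a b c : S) :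
    op (mul a b) c = op (op a b) c :=
  calc op (mul a b) c
      = op e₀ (op (mul a b) c) := (h2 _ _).symm
    _ = op (op e₀ (mul a b)) c := (hop _ _ _).symm
    _ = op (op a b) c := by rw [op_e₀_mul_eq_op mul op e₀ h1 h2]

/-- Every left identical `e₀`-semig is a left semigroup-joined-semigroup:
if `(S, mul)` and `(S, op)` are semigroups on the same set and `e₀` satisfies
`e₀ ⊙ (x·y) = e₀ ⊙ (x⊙y) = x⊙y` for all `x, y`, then the left `e`-join law
`e ⊙ (x·y) = e ⊙ (x⊙y)` holds for every `e ∈ S`. -/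
theorem stmt_17 {S : Type*} (mul op : S → S → S)
    (hmul : ∀ x y z : S, mul (mul x y) z = mul x (mul y z))
    (hop : ∀ x y z : S, op (op x y) z = op x (op y z))
    (e₀ : S)
    (h1 : ∀ x y : S, op e₀ (mul x y) = op e₀ (op x y))
    (h2 : ∀ x y : S, op e₀ (op x y) = op x y) :
    ∀ e x y : S, op e (mul x y) = op e (op x y) := by
  intro e x y
  calc op e (mul x y)
      = op e₀ (mul e (mul x y)) := (op_e₀_mul_eq_op mul op e₀ h1 h2 _ _).symm
    _ = op e₀ (mul (mul e x) y) := by rw [hmul]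
    _ = op (mul e x) y := op_e₀_mul_eq_op mul op e₀ h1 h2 _ _
    _ = op (op e x) y := op_mul_left_eq_op_op_left mul op hop e₀ h1 h2 _ _ _
    _ = op e (op x y) := hop _ _ _
end

section
/- Let (G,·) be a group with identity e and let ⊙ be a binary operation on G. Then (G,·,e,⊙) is an identical group-e-semigroup (i.e. ⊙ is associative and e⊙(x·y) = e⊙(x⊙y) = x⊙y = (x·y)⊙e for all x,y ∈ G) if and only if there exists a function f : G → G that is associative (f(f(x·y)·z) = f(x·f(y·z)) for all x,y,z) and idempotent (f(f(x)) = f(x) for all x) such that x⊙y = f(x·y) for all x,y ∈ G; moreover such an f is unique, namely f(x) = e⊙x for all x ∈ G, and it is a strong decomposer of (G,·). -/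
/-! Putting `b = 1` or `c = 1` in the associativity law of an idempotent `f` shows that `f`
may be applied or dropped freely inside an argument of `f`: `f (f b * c) = f (b * c)` and
`f (a * f b) = f (a * b)`. Consequently `x * (f x)⁻¹` and `(f y)⁻¹ * y` have the same image
as `1`, which makes `f` a strong decomposer. For the equivalence, `f := op 1` is the required
function, and conversely `op x y := f (x * y)` inherits all four laws from those of `f`. -/

section

variable {M : Type*} [Monoid M]

def IsIdenticalESemigroup (op : M → M → M) : Prop :=
  (∀ x y z : M, op (op x y) z = op x (op y z)) ∧
    (∀ x y : M, op 1 (x * y) = op 1 (op x y)) ∧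
    (∀ x y : M, op 1 (op x y) = op x y) ∧
    (∀ x y : M, op x y = op (x * y) 1)

def IsAssociativeFun (f : M → M) : Prop :=
  ∀ x y z : M, f (f (x * y) * z) = f (x * f (y * z))

namespace IsAssociativeFun

variable {f : M → M}

theorem map_map_mul (hf : IsAssociativeFun f) (hid : ∀ x, f (f x) = f x) (b c : M) :
    f (f b * c) = f (b * c) := by
  simpa only [one_mul, hid] using hf 1 b c

theorem map_mul_map (hf : IsAssociativeFun f) (hid : ∀ x, f (f x) = f x) (a b : M) :
    f (a * f b) = f (a * b) := by
  simpa only [mul_one, hid] using (hf a b 1).symm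

end IsAssociativeFun

theorem isIdenticalESemigroup_iff (op : M → M → M) :
    IsIdenticalESemigroup op ↔
      ∃ f : M → M, IsAssociativeFun f ∧ (∀ x, f (f x) = f x) ∧ ∀ x y, op x y = f (x * y) := by
  constructor
  · rintro ⟨hassoc, hmul, habsorb, -⟩
    have hop_eq : ∀ x y, op x y = op 1 (x * y) := fun x y => ((hmul x y).trans (habsorb x y)).symm
    refine ⟨op 1, fun x y z => ?_, habsorb 1, hop_eq⟩
    simp only [← hop_eq, hassoc]
  · rintro ⟨f, hf, hid, hop⟩
    refine ⟨fun x y z => ?_, fun x y => ?_, fun x y => ?_, fun x y => ?_⟩ <;>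
      simp only [hop, one_mul, mul_one, hid]
    exact hf x y z

end

def IsStrongDecomposer {G : Type*} [Group G] (f : G → G) : Prop :=
  ∀ x y : G, f (x * (f x)⁻¹ * y) = f y ∧ f (x * ((f y)⁻¹ * y)) = f x

theorem IsAssociativeFun.isStrongDecomposer {G : Type*} [Group G] {f : G → G}
    (hf : IsAssociativeFun f) (hid : ∀ x, f (f x) = f x) : IsStrongDecomposer f := by
  have hleft : ∀ x, f (x * (f x)⁻¹) = f 1 := fun x => by
    rw [← hf.map_map_mul hid, mul_inv_cancel]
  have hright : ∀ y, f ((f y)⁻¹ * y) = f 1 := fun y => by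
    rw [← hf.map_mul_map hid, inv_mul_cancel]
  intro x y
  constructor
  · rw [← hf.map_map_mul hid, hleft, hf.map_map_mul hid, one_mul]
  · rw [← hf.map_mul_map hid, hright, hf.map_mul_map hid, mul_one]

/-- Let `(G, ·)` be a group with identity `e = 1` and `⊙` a binary
operation. Then `(G, ·, e, ⊙)` is an identical group-`e`-semigroup (i.e. `⊙` is
associative and `e⊙(x·y) = e⊙(x⊙y) = x⊙y = (x·y)⊙e`) iff there exists an associative
and idempotent function `f : G → G` with `x ⊙ y = f(x·y)`; moreover such an `f` is
unique, namely `f x = e ⊙ x`, and it is a strong decomposer of `(G, ·)`. -/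
theorem stmt_18 {G : Type*} [Group G] (op : G → G → G) :
    (((∀ x y z : G, op (op x y) z = op x (op y z)) ∧
      (∀ x y : G, op 1 (x * y) = op 1 (op x y)) ∧
      (∀ x y : G, op 1 (op x y) = op x y) ∧
      (∀ x y : G, op x y = op (x * y) 1)) ↔
      (∃ f : G → G, (∀ x y z : G, f (f (x * y) * z) = f (x * f (y * z))) ∧
        (∀ x : G, f (f x) = f x) ∧ ∀ x y : G, op x y = f (x * y))) ∧
    (((∀ x y z : G, op (op x y) z = op x (op y z)) ∧
      (∀ x y : G, op 1 (x * y) = op 1 (op x y)) ∧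
      (∀ x y : G, op 1 (op x y) = op x y) ∧
      (∀ x y : G, op x y = op (x * y) 1)) →
      ∀ f : G → G,
        ((∀ x y z : G, f (f (x * y) * z) = f (x * f (y * z))) ∧
          (∀ x : G, f (f x) = f x) ∧ (∀ x y : G, op x y = f (x * y))) →
        (∀ x : G, f x = op 1 x) ∧
        (∀ x y : G, f ((x * (f x)⁻¹) * y) = f y ∧ f (x * ((f y)⁻¹ * y)) = f x)) := by
  refine ⟨isIdenticalESemigroup_iff op, fun _ f ⟨hf, hid, hop⟩ => ⟨fun x => ?_, ?_⟩⟩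
  · rw [hop, one_mul]
  · exact IsAssociativeFun.isStrongDecomposer hf hid
end

section
/- Let (S,·) be a semigroup with a left identity e (e·x = x for all x ∈ S) and let ⊙ be a binary operation on S. Then (S,·,e,⊙) is a left identical e-semig (i.e. ⊙ is associative and e⊙(x·y) = e⊙(x⊙y) = x⊙y for all x,y ∈ S) if and only if there exists a unique strongly associative function f : S → S (meaning f(x·f(y·z)) = f(f(x·y)·z) = f(x·y·z) for all x,y,z ∈ S) such that x⊙y = f(x·y) for all x,y ∈ S. -/
/-- Let `(S, mul)` be a semigroup with a left identity `e` and `op` a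
binary operation on `S`. Then `(S, mul, e, op)` is a left identical `e`-semig (i.e.
`op` is associative and `e⊙(x·y) = e⊙(x⊙y) = x⊙y` for all `x, y`) iff there exists a
unique strongly associative function `f : S → S` (that is,
`f(x·f(y·z)) = f(f(x·y)·z) = f(x·y·z)`) such that `x ⊙ y = f(x·y)` for all `x, y`. -/
theorem stmt_19 {S : Type*} (mul op : S → S → S) (e : S)
    (hmul : ∀ x y z : S, mul (mul x y) z = mul x (mul y z))
    (he : ∀ x : S, mul e x = x) :
    ((∀ x y z : S, op (op x y) z = op x (op y z)) ∧
      (∀ x y : S, op e (mul x y) = op e (op x y)) ∧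
      (∀ x y : S, op e (op x y) = op x y)) ↔
    (∃! f : S → S,
      (∀ x y z : S, f (mul x (f (mul y z))) = f (mul (f (mul x y)) z) ∧
        f (mul (f (mul x y)) z) = f (mul (mul x y) z)) ∧
      ∀ x y : S, op x y = f (mul x y)) := by
  constructor
  · rintro ⟨hassoc, h1, h2⟩
    have key : ∀ a b : S, op a b = op e (mul a b) := fun a b => by
      rw [h1, h2]
    refine ⟨fun s => op e s, ⟨?_, ?_⟩, ?_⟩
    · intro x y z
      dsimp only
      constructor
      · have l : op e (mul x (op e (mul y z))) = op x (op y z) := by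
          rw [← key, ← key]
        have r : op e (mul (op e (mul x y)) z) = op (op x y) z := by
          rw [← key, ← key]
        rw [l, r, hassoc]
      · calc op e (mul (op e (mul x y)) z)
              = op (op e (mul x y)) z := (key _ _).symm
          _ = op e (op (mul x y) z) := hassoc e _ z
          _ = op (mul x y) z := h2 _ _
          _ = op e (mul (mul x y) z) := key _ _
    · intro x y
      dsimp only
      exact key x y
    · rintro g ⟨-, hg⟩
      funext s
      simpa [he] using (hg e s).symm
  · rintro ⟨f, ⟨hsa, hf⟩, -⟩
    have key : ∀ x y : S, f (mul e (f (mul x y))) = f (mul x y) := by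
      intro x y
      have h := ((hsa e x y).1.trans (hsa e x y).2)
      rwa [he x] at h
    refine ⟨?_, ?_, ?_⟩
    · intro x y z
      simp only [hf]
      exact (hsa x y z).1.symm
    · intro x y
      rw [hf e, hf e (op x y), hf x y, he, key]
    · intro x y
      rw [hf e, hf x y, key, ← hf]
end
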